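/- A Banach space X is acs if and only if for all x, y ∈ S_X with ‖x+y‖ = 2 one has lim_{t→0⁺} (‖x+ty‖ + ‖x−ty‖ − 2)/t = 0. -/

import Mathlib

open Filter Topology

lemma dual_apply_le {X : Type*} [NormedAddCommGroup X] [NormedSpace ℝ X]
    (φ : StrongDual ℝ X) (z : X) : φ z ≤ ‖φ‖ * ‖z‖ :=
  (le_abs_self _).trans (φ.le_opNorm z)


/-- Hahn–Banach construction: given the key inequality `a + b*c ≤ ‖a•x + b•y‖`, there is a
norm-one functional with `f x = 1` and `f y = c`. -/
lemma exists_dual_of_lower_bound {X : Type*} [NormedAddCommGroup X] [NormedSpace ℝ X]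
    (x y : X) (hx : ‖x‖ = 1) (c : ℝ)
    (key : ∀ a b : ℝ, a + b * c ≤ ‖a • x + b • y‖) :
    ∃ f : StrongDual ℝ X, ‖f‖ = 1 ∧ f x = 1 ∧ f y = c := by
  have hx0 : x ≠ 0 := by intro h; rw [h, norm_zero] at hx; norm_num at hx
  set v : X := y - c • x with hv
  -- the sublinear functional: distance to the span of v
  set N : X → ℝ := fun z => ⨅ b : ℝ, ‖z + b • v‖ with hN
  have hbdd : ∀ z : X, BddBelow (Set.range fun b : ℝ => ‖z + b • v‖) := by
    intro z; exact ⟨0, by rintro r ⟨b, rfl⟩; exact norm_nonneg _⟩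
  have hNle : ∀ z b, N z ≤ ‖z + b • v‖ := fun z b => ciInf_le (hbdd z) b
  have hNge : ∀ z r, (∀ b : ℝ, r ≤ ‖z + b • v‖) → r ≤ N z := fun z r h => le_ciInf h
  have hNnonneg : ∀ z, 0 ≤ N z := fun z => hNge z 0 fun b => norm_nonneg _
  have N_hom : ∀ c' : ℝ, 0 < c' → ∀ z, N (c' • z) = c' * N z := by
    intro c' hc' z
    apply le_antisymm
    · have h : N (c' • z) / c' ≤ N z := by
        apply hNge
        intro b
        rw [div_le_iff₀ hc']
        calc N (c' • z) ≤ ‖c' • z + (c' * b) • v‖ := hNle _ _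
          _ = c' * ‖z + b • v‖ := by
              rw [mul_smul, ← smul_add, norm_smul, Real.norm_eq_abs, abs_of_pos hc']
          _ = ‖z + b • v‖ * c' := mul_comm _ _
      have := (div_le_iff₀ hc').mp h
      linarith
    · apply hNge
      intro b
      have : c' • z + b • v = c' • (z + (b / c') • v) := by
        rw [smul_add, smul_smul, mul_div_cancel₀ _ hc'.ne']
      rw [this, norm_smul, Real.norm_eq_abs, abs_of_pos hc']
      exact mul_le_mul_of_nonneg_left (hNle z (b / c')) hc'.le
  have N_add : ∀ z w, N (z + w) ≤ N z + N w := by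
    intro z w
    refine le_ciInf_add_ciInf fun a b => ?_
    calc N (z + w) ≤ ‖(z + w) + (a + b) • v‖ := hNle _ _
      _ ≤ ‖z + a • v‖ + ‖w + b • v‖ := by
          rw [add_smul]
          calc ‖(z + w) + (a • v + b • v)‖ = ‖(z + a • v) + (w + b • v)‖ := by congr 1; abel
            _ ≤ _ := norm_add_le _ _
  -- the partial linear map on the span of x
  set e := LinearEquiv.toSpanNonzeroSingleton ℝ X x hx0 with he
  set f : X →ₗ.[ℝ] ℝ := ⟨ℝ ∙ x, (e.symm : (ℝ ∙ x) →ₗ[ℝ] ℝ)⟩ with hf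
  have hfval : ∀ z : f.domain, (z : X) = (f z) • x := by
    intro z
    have := e.apply_symm_apply z
    rw [LinearEquiv.toSpanNonzeroSingleton_apply] at this
    have := congrArg (Subtype.val) this
    exact this.symm
  have hfle : ∀ z : f.domain, f z ≤ N z := by
    intro z
    apply hNge
    intro b
    have : (z : X) + b • v = (f z - b * c) • x + b • y := by
      rw [hfval z, hv]; module
    rw [this]
    have := key (f z - b * c) b
    linarith
  obtain ⟨g, hg1, hg2⟩ := exists_extension_of_le_sublinear f N N_hom N_add hfle
  have hxmem : x ∈ (ℝ ∙ x) := Submodule.mem_span_singleton_self x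
  have hgx : g x = 1 := by
    have h1 : f ⟨x, hxmem⟩ = 1 := by
      have := congrArg e.symm (LinearEquiv.toSpanNonzeroSingleton_one ℝ X x hx0)
      rw [LinearEquiv.symm_apply_apply] at this
      exact this.symm
    have := hg1 ⟨x, hxmem⟩
    rw [h1] at this
    exact this
  have hgv : g v = 0 := by
    have h1 : g v ≤ 0 := by
      have := hg2 v
      have h2 : N v ≤ ‖v + (-1 : ℝ) • v‖ := hNle v (-1)
      simp at h2
      linarith
    have h2 : -g v ≤ 0 := by
      have := hg2 (-v)
      have h3 : N (-v) ≤ ‖-v + (1 : ℝ) • v‖ := hNle (-v) 1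
      simp at h3
      rw [map_neg] at this
      linarith
    linarith
  have hgy : g y = c := by
    have : y = v + c • x := by rw [hv]; module
    rw [this, map_add, hgv, map_smul, hgx, smul_eq_mul]; ring
  have hgbound : ∀ z, ‖g z‖ ≤ 1 * ‖z‖ := by
    intro z
    rw [one_mul, Real.norm_eq_abs, abs_le]
    constructor
    · have := hg2 (-z)
      have h3 : N (-z) ≤ ‖-z + (0 : ℝ) • v‖ := hNle (-z) 0
      simp at h3
      rw [map_neg] at this
      linarith
    · have := hg2 z
      have h3 : N z ≤ ‖z + (0 : ℝ) • v‖ := hNle z 0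
      simp at h3
      linarith
  refine ⟨g.mkContinuous 1 hgbound, ?_, hgx, hgy⟩
  apply le_antisymm
  · exact (g.mkContinuous_norm_le one_pos.le hgbound)
  · have := (g.mkContinuous 1 hgbound).le_opNorm x
    rw [hx, mul_one] at this
    calc (1 : ℝ) = g x := hgx.symm
      _ ≤ ‖(g.mkContinuous 1 hgbound) x‖ := le_abs_self _
      _ ≤ _ := this

/-- A real Banach space is acs if whenever x, y are unit vectors with ‖x+y‖ = 2 and x* is a
norm-one functional with x*(x) = 1, then x*(y) = 1. -/
def IsAcs (X : Type*) [NormedAddCommGroup X] [NormedSpace ℝ X] : Prop :=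
  ∀ x y : X, ‖x‖ = 1 → ‖y‖ = 1 → ‖x + y‖ = 2 →
    ∀ f : StrongDual ℝ X, ‖f‖ = 1 → f x = 1 → f y = 1

theorem acs_iff_limit (X : Type*) [NormedAddCommGroup X] [NormedSpace ℝ X] [CompleteSpace X] :
    IsAcs X ↔
      ∀ x y : X, ‖x‖ = 1 → ‖y‖ = 1 → ‖x + y‖ = 2 →
        Tendsto (fun t : ℝ => (‖x + t • y‖ + ‖x - t • y‖ - 2) / t) (𝓝[>] 0) (𝓝 0) := by
  constructor
  · intro hacs
    intro x y hx hy hxy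
    have hx0 : x ≠ 0 := by intro h; rw [h, norm_zero] at hx; norm_num at hx
    obtain ⟨f₀, hf₀, hf₀x⟩ := exists_dual_vector ℝ x (norm_ne_zero_iff.mpr hx0)
    have hf₀x : f₀ x = 1 := by simpa [hx] using hf₀x
    have hf₀y : f₀ y = 1 := hacs x y hx hy hxy f₀ hf₀ hf₀x
    have hf₀le : ∀ z : X, f₀ z ≤ ‖z‖ := by
      intro z; simpa [hf₀] using dual_apply_le f₀ z
    have hplus : ∀ t : ℝ, 0 ≤ t → ‖x + t • y‖ = 1 + t := by
      intro t ht
      apply le_antisymm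
      · calc ‖x + t • y‖ ≤ ‖x‖ + ‖t • y‖ := norm_add_le _ _
          _ = 1 + t := by rw [hx, norm_smul, Real.norm_eq_abs, abs_of_nonneg ht, hy, mul_one]
      · have := hf₀le (x + t • y)
        rw [map_add, map_smul, smul_eq_mul, hf₀x, hf₀y, mul_one] at this
        exact this
    set g : ℝ → ℝ := fun t => (‖x + t • y‖ + ‖x - t • y‖ - 2) / t with hgdef
    have hg0 : ∀ t : ℝ, 0 < t → 0 ≤ g t := by
      intro t ht
      apply div_nonneg _ ht.le
      have e : (x + t • y) + (x - t • y) = (2 : ℝ) • x := by module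
      have := norm_add_le (x + t • y) (x - t • y)
      rw [e, norm_smul, hx] at this
      simp at this
      linarith
    have hgmono : ∀ t₁ t₂ : ℝ, 0 < t₁ → t₁ ≤ t₂ → g t₁ ≤ g t₂ := by
      intro t₁ t₂ h1 h12
      have h2 : 0 < t₂ := lt_of_lt_of_le h1 h12
      set l : ℝ := t₁ / t₂ with hl
      have hl0 : 0 < l := div_pos h1 h2
      have hl1 : l ≤ 1 := (div_le_one h2).mpr h12
      have ht₁ : t₁ = l * t₂ := (div_mul_cancel₀ t₁ h2.ne').symm
      clear_value l
      have e1 : x + t₁ • y = l • (x + t₂ • y) + (1 - l) • x := by rw [ht₁]; module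
      have e2 : x - t₁ • y = l • (x - t₂ • y) + (1 - l) • x := by rw [ht₁]; module
      have h1' : ‖x + t₁ • y‖ ≤ l * ‖x + t₂ • y‖ + (1 - l) := by
        rw [e1]
        calc ‖l • (x + t₂ • y) + (1 - l) • x‖ ≤ ‖l • (x + t₂ • y)‖ + ‖(1 - l) • x‖ :=
              norm_add_le _ _
          _ = l * ‖x + t₂ • y‖ + (1 - l) := by
              rw [norm_smul, norm_smul, Real.norm_eq_abs, Real.norm_eq_abs, abs_of_pos hl0,
                abs_of_nonneg (by linarith), hx, mul_one]
      have h2' : ‖x - t₁ • y‖ ≤ l * ‖x - t₂ • y‖ + (1 - l) := by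
        rw [e2]
        calc ‖l • (x - t₂ • y) + (1 - l) • x‖ ≤ ‖l • (x - t₂ • y)‖ + ‖(1 - l) • x‖ :=
              norm_add_le _ _
          _ = l * ‖x - t₂ • y‖ + (1 - l) := by
              rw [norm_smul, norm_smul, Real.norm_eq_abs, Real.norm_eq_abs, abs_of_pos hl0,
                abs_of_nonneg (by linarith), hx, mul_one]
      rw [hgdef]
      simp only
      rw [div_le_div_iff₀ h1 h2]
      have H : ‖x + t₁ • y‖ + ‖x - t₁ • y‖ - 2 ≤
          l * (‖x + t₂ • y‖ + ‖x - t₂ • y‖ - 2) := by nlinarith [h1', h2']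
      calc (‖x + t₁ • y‖ + ‖x - t₁ • y‖ - 2) * t₂
          ≤ (l * (‖x + t₂ • y‖ + ‖x - t₂ • y‖ - 2)) * t₂ :=
            mul_le_mul_of_nonneg_right H h2.le
        _ = (‖x + t₂ • y‖ + ‖x - t₂ • y‖ - 2) * t₁ := by rw [ht₁]; ring
    have hsmall : ∀ ε : ℝ, 0 < ε → ∃ t : ℝ, 0 < t ∧ g t < ε := by
      intro ε hε
      by_contra hcon
      push_neg at hcon
      set c : ℝ := 1 - ε with hc
      have hcm : -1 ≤ c := by
        have h1 := hcon 1 one_pos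
        have hg1 : g 1 = ‖x + y‖ + ‖x - y‖ - 2 := by rw [hgdef]; simp
        have hxmy : ‖x - y‖ ≤ 2 := by
          calc ‖x - y‖ ≤ ‖x‖ + ‖y‖ := norm_sub_le _ _
            _ = 2 := by rw [hx, hy]; norm_num
        rw [hg1, hxy] at h1
        rw [hc]; linarith
      have hlow : ∀ t : ℝ, 0 < t → 1 - c * t ≤ ‖x - t • y‖ := by
        intro t ht
        have h := hcon t ht
        rw [hgdef] at h
        simp only at h
        rw [le_div_iff₀ ht] at h
        have hp := hplus t ht.le
        rw [hc]; nlinarith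
      have key : ∀ a b : ℝ, a + b * c ≤ ‖a • x + b • y‖ := by
        intro a b
        rcases le_or_gt 0 b with hb | hb
        · have e : f₀ (a • x + b • y) = a + b := by
            rw [map_add, map_smul, map_smul, smul_eq_mul, smul_eq_mul, hf₀x, hf₀y]; ring
          have h1 := hf₀le (a • x + b • y)
          rw [e] at h1
          nlinarith
        · rcases le_or_gt a 0 with ha | ha
          · have h1 : ‖b • y‖ ≤ ‖a • x + b • y‖ + ‖a • x‖ := by
              calc ‖b • y‖ = ‖(a • x + b • y) + (-(a • x))‖ := by congr 1; abel
                _ ≤ ‖a • x + b • y‖ + ‖-(a • x)‖ := norm_add_le _ _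
                _ = ‖a • x + b • y‖ + ‖a • x‖ := by rw [norm_neg]
            rw [norm_smul, norm_smul, Real.norm_eq_abs, Real.norm_eq_abs, hx, hy,
              mul_one, mul_one, abs_of_nonpos ha, abs_of_neg hb] at h1
            nlinarith
          · have ht : 0 < -b / a := div_pos (neg_pos.mpr hb) ha
            have h := hlow (-b / a) ht
            have ha' : a ≠ 0 := ha.ne'
            have hab : a * (-b / a) = -b := by field_simp
            have e : a • (x - (-b / a) • y) = a • x + b • y := by
              rw [smul_sub, smul_smul, hab]; module
            have e2 : ‖a • x + b • y‖ = a * ‖x - (-b / a) • y‖ := by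
              rw [← e, norm_smul, Real.norm_eq_abs, abs_of_pos ha]
            rw [e2]
            have hm := mul_le_mul_of_nonneg_left h ha.le
            have hexp : a * (1 - c * (-b / a)) = a + b * c := by
              field_simp
              ring
            linarith [hm, hexp]
      obtain ⟨F, hF, hFx, hFy⟩ := exists_dual_of_lower_bound x y hx c key
      have := hacs x y hx hy hxy F hF hFx
      rw [hFy] at this
      rw [hc] at this
      linarith
    rw [Metric.tendsto_nhds]
    intro ε hε
    obtain ⟨t₀, ht₀, hgt₀⟩ := hsmall ε hε
    filter_upwards [Ioo_mem_nhdsGT_of_mem (Set.left_mem_Ico.mpr ht₀)] with t ht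
    rw [Real.dist_eq, sub_zero, abs_of_nonneg (hg0 t ht.1)]
    exact lt_of_le_of_lt (hgmono t t₀ ht.1 ht.2.le) hgt₀
  · intro hlim
    intro x y hx hy hxy f hf hfx
    have hxy0 : x + y ≠ 0 := by intro h; rw [h, norm_zero] at hxy; norm_num at hxy
    obtain ⟨h, hh, hhxy⟩ := exists_dual_vector ℝ (x + y) (norm_ne_zero_iff.mpr hxy0)
    have hhxy' : h (x + y) = 2 := by simpa [hxy] using hhxy
    have hhx : h x ≤ 1 := by simpa [hh, hx] using dual_apply_le h x
    have hhy : h y ≤ 1 := by simpa [hh, hy] using dual_apply_le h y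
    have hsum : h x + h y = 2 := by rw [← map_add]; exact hhxy'
    have hhx1 : h x = 1 := by linarith
    have hhy1 : h y = 1 := by linarith
    have hge : ∀ᶠ t in 𝓝[>] (0 : ℝ),
        1 - f y ≤ (‖x + t • y‖ + ‖x - t • y‖ - 2) / t := by
      filter_upwards [self_mem_nhdsWithin] with t ht
      have ht : (0 : ℝ) < t := ht
      rw [le_div_iff₀ ht]
      have e1 : 1 + t ≤ ‖x + t • y‖ := by
        have := dual_apply_le h (x + t • y)
        rw [map_add, map_smul, smul_eq_mul, hhx1, hhy1, hh, one_mul, mul_one] at this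
        exact this
      have e2 : 1 - t * f y ≤ ‖x - t • y‖ := by
        have := dual_apply_le f (x - t • y)
        rw [map_sub, map_smul, smul_eq_mul, hfx, hf, one_mul] at this
        exact this
      nlinarith
    have h0 : 1 - f y ≤ 0 := ge_of_tendsto (hlim x y hx hy hxy) hge
    have hfy : f y ≤ 1 := by simpa [hf, hy] using dual_apply_le f y
    linarith
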